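/- arXiv:2304.14762 — 3 statements merged into one kernel-verified Lean document; each statement's English description precedes it below -/
import Mathlib

section
/- Let q, p_Δ be the densities of N(0,I_d) and of π N(0,I_d)+(1-π)N(Δ,I_d) with π ∈ (0,1). For any δ > 0 and any x with ‖x‖ ≤ δ, ‖∇log p_Δ(x) - ∇log q(x)‖² ≤ (1-π)² ‖Δ‖² / (π² exp(-2δ‖Δ‖ + ‖Δ‖²)). -/
/-!
Since `‖x - Δ‖² = ‖x‖² - 2⟪Δ, x⟫ + ‖Δ‖²`, the mixture factors as
`p_Δ = q · (π + (1 - π) exp t)` with `t = ⟪Δ, x⟫ - ‖Δ‖² / 2`, so the two scores differ by the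
gradient of `log (π + (1 - π) exp t)`, namely `(1 - π) exp t / (π + (1 - π) exp t) • Δ`.
Dropping `(1 - π) exp t` from the denominator and using `⟪Δ, x⟫ ≤ δ ‖Δ‖` on the ball gives the bound.
-/

open Real InnerProductSpace

variable {E : Type*} [NormedAddCommGroup E] [InnerProductSpace ℝ E]

theorem exp_neg_norm_sub_sq_div_two (y v : E) :
    exp (-‖y - v‖ ^ 2 / 2) = exp (-‖y‖ ^ 2 / 2) * exp (⟪v, y⟫_ℝ - ‖v‖ ^ 2 / 2) := by
  rw [← exp_add, norm_sub_sq_real, real_inner_comm]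
  ring_nf

variable [CompleteSpace E]

theorem HasGradientAt.add {f g : E → ℝ} {f' g' x : E} (hf : HasGradientAt f f' x)
    (hg : HasGradientAt g g' x) : HasGradientAt (fun y => f y + g y) (f' + g') x := by
  rw [hasGradientAt_iff_hasFDerivAt] at *
  rw [map_add]
  exact hf.add hg

theorem HasGradientAt.sub_const {f : E → ℝ} {f' x : E} (hf : HasGradientAt f f' x) (c : ℝ) :
    HasGradientAt (fun y => f y - c) f' x := by
  rw [hasGradientAt_iff_hasFDerivAt] at *
  exact hf.sub_const c

theorem HasDerivAt.comp_hasGradientAt {g : ℝ → ℝ} {g' : ℝ} {f : E → ℝ} {f' x : E}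
    (hg : HasDerivAt g g' (f x)) (hf : HasGradientAt f f' x) :
    HasGradientAt (fun y => g (f y)) (g' • f') x := by
  rw [hasGradientAt_iff_hasFDerivAt] at *
  rw [map_smul]
  exact hg.comp_hasFDerivAt x hf

theorem hasGradientAt_inner (v x : E) : HasGradientAt (fun y => ⟪v, y⟫_ℝ) v x := by
  rw [hasGradientAt_iff_hasFDerivAt]
  exact (toDual ℝ E v).hasFDerivAt

theorem hasDerivAt_log_add_mul_exp {a b s : ℝ} (h : 0 < a + b * exp s) :
    HasDerivAt (fun s => log (a + b * exp s)) (b * exp s / (a + b * exp s)) s := by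
  simpa [div_eq_inv_mul] using (((hasDerivAt_exp s).const_mul b).const_add a).log h.ne'

theorem gradient_log_mixture_sub_gradient_log_gaussian {a b c : ℝ} (ha : 0 < a) (hb : 0 ≤ b)
    (hc : 0 < c) (v x : E) :
    gradient (fun y => log (a * (c * exp (-‖y‖ ^ 2 / 2)) + b * (c * exp (-‖y - v‖ ^ 2 / 2)))) x
        - gradient (fun y => log (c * exp (-‖y‖ ^ 2 / 2))) x
      = (b * exp (⟪v, x⟫_ℝ - ‖v‖ ^ 2 / 2) / (a + b * exp (⟪v, x⟫_ℝ - ‖v‖ ^ 2 / 2))) • v := by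
  have hpos : ∀ y : E, 0 < a + b * exp (⟪v, y⟫_ℝ - ‖v‖ ^ 2 / 2) := fun y => by positivity
  have hsplit : (fun y => log (a * (c * exp (-‖y‖ ^ 2 / 2)) + b * (c * exp (-‖y - v‖ ^ 2 / 2))))
      = fun y => log (c * exp (-‖y‖ ^ 2 / 2)) + log (a + b * exp (⟪v, y⟫_ℝ - ‖v‖ ^ 2 / 2)) := by
    funext y
    rw [← log_mul (by positivity) (hpos y).ne', exp_neg_norm_sub_sq_div_two]
    ring_nf
  have hgauss : DifferentiableAt ℝ (fun y => log (c * exp (-‖y‖ ^ 2 / 2))) x := by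
    have hnorm : DifferentiableAt ℝ (fun y : E => ‖y‖ ^ 2) x := differentiableAt_id.norm_sq ℝ
    fun_prop (disch := positivity)
  have hratio := HasDerivAt.comp_hasGradientAt (f := fun y => ⟪v, y⟫_ℝ - ‖v‖ ^ 2 / 2)
    (hasDerivAt_log_add_mul_exp (hpos x)) ((hasGradientAt_inner v x).sub_const _)
  rw [hsplit, (hgauss.hasGradientAt.add hratio).gradient, add_sub_cancel_left]

theorem sq_mul_exp_div_add_mul_exp_le {a b t s : ℝ} (ha : 0 < a) (hb : 0 ≤ b) (hts : t ≤ s) :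
    (b * exp t / (a + b * exp t)) ^ 2 ≤ b ^ 2 / (a ^ 2 * exp (-2 * s)) := by
  have hle : b * exp t / (a + b * exp t) ≤ b * exp s / a :=
    calc b * exp t / (a + b * exp t) ≤ b * exp t / a := by
          gcongr
          exact le_add_of_nonneg_right (by positivity)
      _ ≤ b * exp s / a := by gcongr
  calc (b * exp t / (a + b * exp t)) ^ 2 ≤ (b * exp s / a) ^ 2 := by gcongr
    _ = b ^ 2 / (a ^ 2 * exp (-2 * s)) := by
      rw [show -2 * s = -(s + s) by ring, exp_neg, exp_add]
      field_simp

theorem score_difference_bound_on_ball_general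
    (d : ℕ) (π' : ℝ) (hπ : π' ∈ Set.Ioo (0:ℝ) 1)
    (Δ : EuclideanSpace ℝ (Fin d))
    (q pΔ : EuclideanSpace ℝ (Fin d) → ℝ)
    (hq : ∀ x, q x = (2 * Real.pi) ^ (-(d:ℝ)/2) * Real.exp (-‖x‖^2 / 2))
    (hp : ∀ x, pΔ x =
      π' * ((2 * Real.pi) ^ (-(d:ℝ)/2) * Real.exp (-‖x‖^2 / 2)) +
      (1 - π') * ((2 * Real.pi) ^ (-(d:ℝ)/2) * Real.exp (-‖x - Δ‖^2 / 2)))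
    (δ : ℝ) :
    ∀ x, ‖x‖ ≤ δ →
      ‖gradient (fun y => Real.log (pΔ y)) x
          - gradient (fun y => Real.log (q y)) x‖^2
        ≤ (1 - π')^2 * ‖Δ‖^2
          / (π'^2 * Real.exp (-2 * δ * ‖Δ‖ + ‖Δ‖^2)) := by
  intro x hx
  have hc : 0 < (2 * Real.pi) ^ (-(d:ℝ)/2) := by positivity
  have ht : ⟪Δ, x⟫_ℝ - ‖Δ‖ ^ 2 / 2 ≤ δ * ‖Δ‖ - ‖Δ‖ ^ 2 / 2 := by
    have := real_inner_le_norm Δ x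
    nlinarith [norm_nonneg Δ]
  simp only [hp, hq]
  rw [gradient_log_mixture_sub_gradient_log_gaussian hπ.1 (sub_nonneg.2 hπ.2.le) hc,
    norm_smul, mul_pow, norm_eq_abs, sq_abs]
  calc _ ≤ (1 - π') ^ 2 / (π' ^ 2 * exp (-2 * (δ * ‖Δ‖ - ‖Δ‖ ^ 2 / 2))) * ‖Δ‖ ^ 2 := by
        gcongr
        exact sq_mul_exp_div_add_mul_exp_le hπ.1 (sub_nonneg.2 hπ.2.le) ht
    _ = _ := by
        rw [show -2 * (δ * ‖Δ‖ - ‖Δ‖ ^ 2 / 2) = -2 * δ * ‖Δ‖ + ‖Δ‖ ^ 2 by ring]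
        ring

/-- bound on the squared score difference on the ball `‖x‖ ≤ δ`. -/
theorem score_difference_bound_on_ball
    (d : ℕ) (π' : ℝ) (hπ : π' ∈ Set.Ioo (0:ℝ) 1)
    (Δ : EuclideanSpace ℝ (Fin d))
    (q pΔ : EuclideanSpace ℝ (Fin d) → ℝ)
    (hq : ∀ x, q x = (2 * Real.pi) ^ (-(d:ℝ)/2) * Real.exp (-‖x‖^2 / 2))
    (hp : ∀ x, pΔ x =
      π' * ((2 * Real.pi) ^ (-(d:ℝ)/2) * Real.exp (-‖x‖^2 / 2)) +
      (1 - π') * ((2 * Real.pi) ^ (-(d:ℝ)/2) * Real.exp (-‖x - Δ‖^2 / 2)))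
    (δ : ℝ) (hδ : 0 < δ) :
    ∀ x, ‖x‖ ≤ δ →
      ‖gradient (fun y => Real.log (pΔ y)) x
          - gradient (fun y => Real.log (q y)) x‖^2
        ≤ (1 - π')^2 * ‖Δ‖^2
          / (π'^2 * Real.exp (-2 * δ * ‖Δ‖ + ‖Δ‖^2)) :=
  score_difference_bound_on_ball_general d π' hπ Δ q pΔ hq hp δ
end

section
/- Let Q = N(0, I_d) and P_Δ = π N(0,I_d) + (1-π) N(Δ, I_d) with π ∈ (0,1). Then the Fisher divergence F(Δ) := E_{x∼Q}[‖∇log p_Δ(x) − ∇log q(x)‖²] satisfies F(Δ) = o(exp(−‖Δ‖²/32)) as ‖Δ‖ → ∞; in particular F(Δ) ≤ ((1-π)² π^{-2} + 5^d) ‖Δ‖² exp(−‖Δ‖²/17). -/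
/-!
Both components have identity covariance, so `p_Δ / q = π + (1 - π) exp (⟪x, Δ⟫ - ‖Δ‖² / 2)`
depends on `x` only through `⟪x, Δ⟫`, and the score difference is `w(x) • Δ`, where
`w = mixtureWeight π (⟪x, Δ⟫ - ‖Δ‖² / 2) ∈ [0, 1]` is the posterior weight of the shifted
component, with `w ≤ (1 - π) / π · exp (⟪x, Δ⟫ - ‖Δ‖² / 2)`.
On the half-space `⟪x, Δ⟫ ≤ θ ‖Δ‖²` this gives `w² ≤ ((1 - π) / π)² exp ((2θ - 1) ‖Δ‖²)`; off it,
`w² ≤ 1 ≤ exp (θ ⟪x, Δ⟫ - θ² ‖Δ‖²)`, whose Gaussian mean is `exp (-θ² ‖Δ‖² / 2)`: a Chernoff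
bound takes the place of a tail bound for `‖x‖`. For `θ = 8 / 17` both terms are at most
`exp (-‖Δ‖² / 17)`, and `‖Δ‖² exp (-‖Δ‖² / 17) = o (exp (-‖Δ‖² / 32))`.
-/

open Real MeasureTheory Filter Asymptotics InnerProductSpace

noncomputable def mixtureWeight (π' t : ℝ) : ℝ := (1 - π') * exp t / (π' + (1 - π') * exp t)

section MixtureWeight

variable {π' : ℝ}

lemma mixtureWeight_denom_pos (h0 : 0 < π') (h1 : π' ≤ 1) (t : ℝ) :
    0 < π' + (1 - π') * exp t := by
  have : 0 ≤ 1 - π' := by linarith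
  positivity

lemma mixtureWeight_nonneg (h0 : 0 < π') (h1 : π' ≤ 1) (t : ℝ) : 0 ≤ mixtureWeight π' t :=
  div_nonneg (mul_nonneg (by linarith) (exp_pos t).le) (mixtureWeight_denom_pos h0 h1 t).le

lemma mixtureWeight_le_one (h0 : 0 < π') (h1 : π' ≤ 1) (t : ℝ) : mixtureWeight π' t ≤ 1 :=
  div_le_one_of_le₀ (by linarith) (mixtureWeight_denom_pos h0 h1 t).le

lemma mixtureWeight_le_mul_exp (h0 : 0 < π') (h1 : π' ≤ 1) (t : ℝ) :
    mixtureWeight π' t ≤ (1 - π') / π' * exp t := by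
  rw [div_mul_eq_mul_div]
  exact div_le_div_of_nonneg_left (mul_nonneg (by linarith) (exp_pos t).le) h0
    (le_add_of_nonneg_right (mul_nonneg (by linarith) (exp_pos t).le))

lemma hasDerivAt_log_mixture (h0 : 0 < π') (h1 : π' ≤ 1) (t : ℝ) :
    HasDerivAt (fun s => log (π' + (1 - π') * exp s)) (mixtureWeight π' t) t := by
  have := (((hasDerivAt_exp t).const_mul (1 - π')).const_add π').log
    (mixtureWeight_denom_pos h0 h1 t).ne'
  simpa [mixtureWeight] using this

lemma mixtureWeight_sub_sq_le (h0 : 0 < π') (h1 : π' ≤ 1) {θ : ℝ} (hθ : 0 ≤ θ) (a t : ℝ) :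
    mixtureWeight π' (t - a / 2) ^ 2 ≤
      ((1 - π') / π') ^ 2 * exp ((2 * θ - 1) * a) + exp (θ * t - θ ^ 2 * a) := by
  by_cases ht : t ≤ θ * a
  · calc mixtureWeight π' (t - a / 2) ^ 2
        ≤ ((1 - π') / π' * exp (t - a / 2)) ^ 2 :=
          pow_le_pow_left₀ (mixtureWeight_nonneg h0 h1 _) (mixtureWeight_le_mul_exp h0 h1 _) 2
      _ = ((1 - π') / π') ^ 2 * exp (2 * t - a) := by
          rw [mul_pow, ← exp_nat_mul]; push_cast; ring_nf
      _ ≤ ((1 - π') / π') ^ 2 * exp ((2 * θ - 1) * a) := by gcongr; linarith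
      _ ≤ _ := le_add_of_nonneg_right (exp_pos _).le
  · have hexp : 1 ≤ exp (θ * t - θ ^ 2 * a) := one_le_exp (by nlinarith)
    have hw : mixtureWeight π' (t - a / 2) ^ 2 ≤ 1 :=
      pow_le_one₀ (mixtureWeight_nonneg h0 h1 _) (mixtureWeight_le_one h0 h1 _)
    have : 0 ≤ ((1 - π') / π') ^ 2 * exp ((2 * θ - 1) * a) := by positivity
    linarith

end MixtureWeight

lemma isLittleO_mul_exp_neg_div {a b : ℝ} (ha : 0 < a) (hab : a < b) :
    (fun s : ℝ => s * exp (-s / a)) =o[atTop] fun s => exp (-s / b) := by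
  have hc : 0 < 1 / a - 1 / b := sub_pos.2 (one_div_lt_one_div_of_lt ha hab)
  have := (isLittleO_pow_exp_pos_mul_atTop 1 hc).mul_isBigO
    (isBigO_refl (fun s : ℝ => exp (-s / a)) atTop)
  refine (this.congr_left fun s => by simp).congr_right fun s => ?_
  rw [← exp_add]; ring_nf

lemma integral_withDensity_ofReal {X E : Type*} [MeasurableSpace X] [NormedAddCommGroup E]
    [NormedSpace ℝ E] {μ : Measure X} {f : X → ℝ} (hf : Measurable f) (hf0 : ∀ x, 0 ≤ f x)
    (g : X → E) :
    ∫ x, g x ∂μ.withDensity (fun x => ENNReal.ofReal (f x)) = ∫ x, f x • g x ∂μ := by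
  rw [integral_withDensity_eq_integral_toReal_smul hf.ennreal_ofReal
    (ae_of_all _ fun _ => ENNReal.ofReal_lt_top)]
  simp_rw [ENNReal.toReal_ofReal (hf0 _)]

lemma gradient_fun_add {V : Type*} [NormedAddCommGroup V] [InnerProductSpace ℝ V] [CompleteSpace V]
    {f g : V → ℝ} {x : V} (hf : DifferentiableAt ℝ f x) (hg : DifferentiableAt ℝ g x) :
    gradient (fun y => f y + g y) x = gradient f x + gradient g x := by
  simp only [gradient, fderiv_fun_add hf hg, map_add]

section StdGaussian

variable {V : Type*} [NormedAddCommGroup V] [InnerProductSpace ℝ V] {π' : ℝ}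

noncomputable def stdGaussianPDF (x : V) : ℝ :=
  (2 * π) ^ (-(Module.finrank ℝ V : ℝ) / 2) * exp (-‖x‖ ^ 2 / 2)

lemma stdGaussianPDF_pos (x : V) : 0 < stdGaussianPDF x := by
  unfold stdGaussianPDF; positivity

lemma stdGaussianPDF_sub (x v : V) :
    stdGaussianPDF (x - v) = stdGaussianPDF x * exp (⟪x, v⟫_ℝ - ‖v‖ ^ 2 / 2) := by
  rw [stdGaussianPDF, stdGaussianPDF, mul_assoc, ← exp_add, norm_sub_sq_real]
  ring_nf

lemma stdGaussianPDF_mul_exp_inner (x v : V) :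
    stdGaussianPDF x * exp ⟪x, v⟫_ℝ = exp (‖v‖ ^ 2 / 2) * stdGaussianPDF (x - v) := by
  rw [stdGaussianPDF_sub, mul_left_comm, ← exp_add]
  ring_nf

lemma differentiableAt_log_stdGaussianPDF (x : V) :
    DifferentiableAt ℝ (fun y => log (stdGaussianPDF y)) x := by
  have hsq : DifferentiableAt ℝ (fun y : V => ‖y‖ ^ 2) x := differentiableAt_id.norm_sq ℝ
  refine DifferentiableAt.log ?_ (stdGaussianPDF_pos x).ne'
  unfold stdGaussianPDF
  fun_prop

lemma measurable_stdGaussianPDF [MeasurableSpace V] [BorelSpace V] :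
    Measurable (stdGaussianPDF : V → ℝ) := by
  unfold stdGaussianPDF; fun_prop

section Score

variable [CompleteSpace V]

lemma hasGradientAt_log_mixture_inner (h0 : 0 < π') (h1 : π' ≤ 1) (Δ x : V) (c : ℝ) :
    HasGradientAt (fun y => log (π' + (1 - π') * exp (⟪y, Δ⟫_ℝ - c)))
      (mixtureWeight π' (⟪x, Δ⟫_ℝ - c) • Δ) x := by
  have hs : HasFDerivAt (fun y => ⟪y, Δ⟫_ℝ - c) (toDual ℝ V Δ) x := by
    have hfun : (fun y => ⟪y, Δ⟫_ℝ - c) = fun y => toDual ℝ V Δ y - c := by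
      funext y; rw [toDual_apply_apply, real_inner_comm]
    rw [hfun]
    exact (toDual ℝ V Δ).hasFDerivAt.sub_const c
  rw [hasGradientAt_iff_hasFDerivAt, map_smul]
  exact (hasDerivAt_log_mixture h0 h1 _).comp_hasFDerivAt x hs

theorem gradient_log_mixture_sub_gradient_log (h0 : 0 < π') (h1 : π' ≤ 1) (Δ x : V) :
    gradient (fun y => log (π' * stdGaussianPDF y + (1 - π') * stdGaussianPDF (y - Δ))) x
      - gradient (fun y => log (stdGaussianPDF y)) x
      = mixtureWeight π' (⟪x, Δ⟫_ℝ - ‖Δ‖ ^ 2 / 2) • Δ := by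
  have hsplit : (fun y => log (π' * stdGaussianPDF y + (1 - π') * stdGaussianPDF (y - Δ)))
      = fun y => log (stdGaussianPDF y) + log (π' + (1 - π') * exp (⟪y, Δ⟫_ℝ - ‖Δ‖ ^ 2 / 2)) := by
    funext y
    rw [← log_mul (stdGaussianPDF_pos y).ne' (mixtureWeight_denom_pos h0 h1 _).ne',
      stdGaussianPDF_sub]
    ring_nf
  have hratio := hasGradientAt_log_mixture_inner h0 h1 Δ x (‖Δ‖ ^ 2 / 2)
  rw [hsplit, gradient_fun_add (differentiableAt_log_stdGaussianPDF x) hratio.differentiableAt,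
    hratio.gradient, add_sub_cancel_left]

end Score

section Integral

variable [FiniteDimensional ℝ V] [MeasurableSpace V] [BorelSpace V]

lemma integral_stdGaussianPDF : ∫ x : V, stdGaussianPDF x = 1 := by
  have hexp : ∀ x : V, exp (-‖x‖ ^ 2 / 2) = exp (-(1 / 2) * ‖x‖ ^ 2) := fun x => by ring_nf
  simp_rw [stdGaussianPDF, hexp]
  rw [integral_const_mul, GaussianFourier.integral_rexp_neg_mul_sq_norm (by norm_num),
    show π / (1 / 2) = 2 * π by ring, ← rpow_add (by positivity), neg_div, neg_add_cancel,
    rpow_zero]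

lemma integrable_stdGaussianPDF : Integrable (stdGaussianPDF : V → ℝ) :=
  Integrable.of_integral_ne_zero (by rw [integral_stdGaussianPDF]; exact one_ne_zero)

lemma integrable_stdGaussianPDF_mul_exp_inner (v : V) :
    Integrable fun x => stdGaussianPDF x * exp ⟪x, v⟫_ℝ := by
  simp_rw [stdGaussianPDF_mul_exp_inner]
  exact (integrable_stdGaussianPDF.comp_sub_right v).const_mul _

lemma integral_stdGaussianPDF_mul_exp_inner (v : V) :
    ∫ x, stdGaussianPDF x * exp ⟪x, v⟫_ℝ = exp (‖v‖ ^ 2 / 2) := by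
  simp_rw [stdGaussianPDF_mul_exp_inner]
  rw [integral_const_mul, integral_sub_right_eq_self, integral_stdGaussianPDF, mul_one]

theorem integral_stdGaussianPDF_mul_mixtureWeight_sq_le (h0 : 0 < π') (h1 : π' ≤ 1)
    {θ : ℝ} (hθ : 0 ≤ θ) (Δ : V) :
    ∫ x, stdGaussianPDF x * mixtureWeight π' (⟪x, Δ⟫_ℝ - ‖Δ‖ ^ 2 / 2) ^ 2 ≤
      ((1 - π') / π') ^ 2 * exp ((2 * θ - 1) * ‖Δ‖ ^ 2) + exp (-(θ ^ 2 * ‖Δ‖ ^ 2 / 2)) := by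
  set A := ((1 - π') / π') ^ 2 * exp ((2 * θ - 1) * ‖Δ‖ ^ 2)
  have hmajorant : ∀ x, stdGaussianPDF x * (A + exp (θ * ⟪x, Δ⟫_ℝ - θ ^ 2 * ‖Δ‖ ^ 2)) =
      A * stdGaussianPDF x + exp (-(θ ^ 2 * ‖Δ‖ ^ 2)) * (stdGaussianPDF x * exp ⟪x, θ • Δ⟫_ℝ) :=
    fun x => by rw [real_inner_smul_right, sub_eq_add_neg, exp_add]; ring
  have hA := (integrable_stdGaussianPDF (V := V)).const_mul A
  have hB := (integrable_stdGaussianPDF_mul_exp_inner (θ • Δ)).const_mul (exp (-(θ ^ 2 * ‖Δ‖ ^ 2)))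
  calc ∫ x, stdGaussianPDF x * mixtureWeight π' (⟪x, Δ⟫_ℝ - ‖Δ‖ ^ 2 / 2) ^ 2
      ≤ ∫ x, A * stdGaussianPDF x +
          exp (-(θ ^ 2 * ‖Δ‖ ^ 2)) * (stdGaussianPDF x * exp ⟪x, θ • Δ⟫_ℝ) := by
        refine integral_mono_of_nonneg (ae_of_all _ fun x => ?_) (hA.add hB)
          (ae_of_all _ fun x => ?_)
        · exact mul_nonneg (stdGaussianPDF_pos x).le (sq_nonneg _)
        · simp only [← hmajorant]
          exact mul_le_mul_of_nonneg_left (mixtureWeight_sub_sq_le h0 h1 hθ _ _)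
            (stdGaussianPDF_pos x).le
    _ = A + exp (-(θ ^ 2 * ‖Δ‖ ^ 2 / 2)) := by
        rw [integral_add hA hB, integral_const_mul, integral_const_mul, integral_stdGaussianPDF,
          integral_stdGaussianPDF_mul_exp_inner, ← exp_add, norm_smul, mul_pow, norm_eq_abs, sq_abs]
        ring_nf

end Integral

end StdGaussian

/-- the Fisher divergence between `Q = N(0, I_d)` and the mixture
`P_Δ = π N(0,I_d) + (1-π) N(Δ, I_d)` is `o(exp(-‖Δ‖²/32))` as `‖Δ‖ → ∞`; in
particular it is bounded by `((1-π)² π⁻² + 5^d) ‖Δ‖² exp(-‖Δ‖²/17)`. -/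
theorem fisher_divergence_decay
    (d : ℕ) (π' : ℝ) (hπ : π' ∈ Set.Ioo (0:ℝ) 1)
    (q : EuclideanSpace ℝ (Fin d) → ℝ)
    (pΔ : EuclideanSpace ℝ (Fin d) → EuclideanSpace ℝ (Fin d) → ℝ)
    (hq : ∀ x, q x = (2 * Real.pi) ^ (-(d:ℝ)/2) * Real.exp (-‖x‖^2 / 2))
    (hp : ∀ Δ x, pΔ Δ x =
      π' * ((2 * Real.pi) ^ (-(d:ℝ)/2) * Real.exp (-‖x‖^2 / 2)) +
      (1 - π') * ((2 * Real.pi) ^ (-(d:ℝ)/2) * Real.exp (-‖x - Δ‖^2 / 2)))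
    (Q : Measure (EuclideanSpace ℝ (Fin d)))
    (hQ : Q = volume.withDensity (fun x => ENNReal.ofReal (q x)))
    (F : EuclideanSpace ℝ (Fin d) → ℝ)
    (hF : ∀ Δ, F Δ = ∫ x, ‖gradient (fun y => Real.log (pΔ Δ y)) x
                          - gradient (fun y => Real.log (q y)) x‖^2 ∂Q) :
    (∀ Δ, F Δ ≤ ((1 - π')^2 * π'⁻¹^2 + 5^d) * ‖Δ‖^2 * Real.exp (-‖Δ‖^2 / 17))
    ∧ F =o[Filter.comap (fun Δ : EuclideanSpace ℝ (Fin d) => ‖Δ‖) atTop]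
        (fun Δ => Real.exp (-‖Δ‖^2 / 32)) := by
  obtain ⟨h0, h1⟩ := hπ
  have hq' : q = stdGaussianPDF :=
    funext fun x => by rw [hq, stdGaussianPDF, finrank_euclideanSpace_fin]
  have hp' : pΔ = fun Δ x => π' * stdGaussianPDF x + (1 - π') * stdGaussianPDF (x - Δ) := by
    funext Δ x; rw [hp, stdGaussianPDF, stdGaussianPDF, finrank_euclideanSpace_fin]
  have hF' : ∀ Δ, F Δ =
      ‖Δ‖ ^ 2 * ∫ x, stdGaussianPDF x * mixtureWeight π' (⟪x, Δ⟫_ℝ - ‖Δ‖ ^ 2 / 2) ^ 2 := by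
    intro Δ
    rw [hF, hQ, hq', hp', integral_withDensity_ofReal measurable_stdGaussianPDF
      (fun x => (stdGaussianPDF_pos x).le), ← integral_const_mul]
    congr 1; funext x
    rw [gradient_log_mixture_sub_gradient_log h0 h1.le, norm_smul, norm_eq_abs, mul_pow, sq_abs,
      smul_eq_mul]
    ring
  have hbound : ∀ Δ, F Δ ≤ ((1 - π')^2 * π'⁻¹^2 + 5^d) * ‖Δ‖^2 * Real.exp (-‖Δ‖^2 / 17) := by
    intro Δ
    have hweight := integral_stdGaussianPDF_mul_mixtureWeight_sq_le h0 h1.le (θ := 8 / 17)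
      (by norm_num) Δ
    rw [show (2 * (8 / 17 : ℝ) - 1) * ‖Δ‖ ^ 2 = -‖Δ‖ ^ 2 / 17 by ring] at hweight
    have hexp_le : exp (-((8 / 17) ^ 2 * ‖Δ‖ ^ 2 / 2)) ≤ 5 ^ d * exp (-‖Δ‖ ^ 2 / 17) :=
      (exp_le_exp.2 (by nlinarith [sq_nonneg ‖Δ‖])).trans
        (le_mul_of_one_le_left (exp_pos _).le (one_le_pow₀ (by norm_num)))
    calc F Δ
        ≤ ‖Δ‖ ^ 2 * (((1 - π') / π') ^ 2 * exp (-‖Δ‖ ^ 2 / 17) + 5 ^ d * exp (-‖Δ‖ ^ 2 / 17)) := by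
          rw [hF']; gcongr; linarith
      _ = _ := by ring
  have hF0 : ∀ Δ, 0 ≤ F Δ := fun Δ => by
    rw [hF]; exact integral_nonneg fun x => by positivity
  have hbigO : F =O[comap (fun Δ => ‖Δ‖) atTop] fun Δ => ‖Δ‖ ^ 2 * exp (-‖Δ‖ ^ 2 / 17) :=
    isBigO_of_le' _ fun Δ => by
      rw [norm_of_nonneg (hF0 Δ), norm_of_nonneg (by positivity), ← mul_assoc]
      exact hbound Δ
  exact ⟨hbound, hbigO.trans_isLittleO <|
    (isLittleO_mul_exp_neg_div (by norm_num) (by norm_num)).comp_tendsto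
      ((tendsto_pow_atTop two_ne_zero).comp tendsto_comap)⟩
end

section
/- Let q and p be positive probability densities on R^d, ν ∈ R^d fixed, and suppose for almost every x the lattice sums φ_q(x) = Σ_{s∈Z} q(x+sν) and φ_p(x) = Σ_{k∈Z} p(x+kν) are finite and positive. Then q^∞(x) := p(x) φ_q(x)/φ_p(x) is a probability density on R^d, i.e. ∫_{R^d} q^∞(x) dx = 1. -/
open Real MeasureTheory
open scoped ENNReal

/-- the limiting density `q∞(x) = p(x) φ_q(x)/φ_p(x)` integrates
to 1, where `φ_q`, `φ_p` are the lattice sums of `q` and `p` along `ν`. -/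
theorem limiting_density_integrates_to_one
    (d : ℕ) (ν : EuclideanSpace ℝ (Fin d))
    (p q : EuclideanSpace ℝ (Fin d) → ℝ)
    (hpmeas : Measurable p) (hqmeas : Measurable q)
    (hppos : ∀ x, 0 < p x) (hqpos : ∀ x, 0 < q x)
    (hqint : ∫ x, q x = 1)
    (hsums : ∀ᵐ x : EuclideanSpace ℝ (Fin d),
      Summable (fun s : ℤ => q (x + (s : ℝ) • ν))
      ∧ Summable (fun k : ℤ => p (x + (k : ℝ) • ν))
      ∧ 0 < ∑' k : ℤ, p (x + (k : ℝ) • ν)) :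
    ∫ x, p x * (∑' s : ℤ, q (x + (s : ℝ) • ν)) / (∑' k : ℤ, p (x + (k : ℝ) • ν))
      = 1 := by
  classical
  set P : EuclideanSpace ℝ (Fin d) → ℝ≥0∞ := fun x => ENNReal.ofReal (p x) with hPdef
  set Q : EuclideanSpace ℝ (Fin d) → ℝ≥0∞ := fun x => ENNReal.ofReal (q x) with hQdef
  set ΦP : EuclideanSpace ℝ (Fin d) → ℝ≥0∞ := fun x => ∑' k : ℤ, P (x + (k : ℝ) • ν) with hΦPdef
  set ΦQ : EuclideanSpace ℝ (Fin d) → ℝ≥0∞ := fun x => ∑' s : ℤ, Q (x + (s : ℝ) • ν) with hΦQdef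
  -- measurability
  have hPm : Measurable P := hpmeas.ennreal_ofReal
  have hQm : Measurable Q := hqmeas.ennreal_ofReal
  have hPs : ∀ s : ℤ, Measurable fun x : EuclideanSpace ℝ (Fin d) => P (x + (s : ℝ) • ν) :=
    fun s => hPm.comp (measurable_add_const _)
  have hQs : ∀ s : ℤ, Measurable fun x : EuclideanSpace ℝ (Fin d) => Q (x + (s : ℝ) • ν) :=
    fun s => hQm.comp (measurable_add_const _)
  have hΦPm : Measurable ΦP := Measurable.ennreal_tsum hPs
  have hΦQm : Measurable ΦQ := Measurable.ennreal_tsum hQs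
  -- vector identities
  have hvec : ∀ (x : EuclideanSpace ℝ (Fin d)) (s k : ℤ),
      x + (s : ℝ) • ν + (k : ℝ) • ν = x + ((s + k : ℤ) : ℝ) • ν := by
    intro x s k; push_cast; module
  have hvneg : ∀ (x : EuclideanSpace ℝ (Fin d)) (s : ℤ), x - (s : ℝ) • ν = x + ((-s : ℤ) : ℝ) • ν := by
    intro x s; push_cast; module
  -- shift invariance of ΦP
  have hΦshift : ∀ (x : EuclideanSpace ℝ (Fin d)) (s : ℤ), ΦP (x + (s : ℝ) • ν) = ΦP x := by
    intro x s
    have : ∀ k : ℤ, P (x + (s : ℝ) • ν + (k : ℝ) • ν) = P (x + ((s + k : ℤ) : ℝ) • ν) :=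
      fun k => by rw [hvec]
    calc ΦP (x + (s : ℝ) • ν) = ∑' k : ℤ, P (x + ((s + k : ℤ) : ℝ) • ν) := by
          simp only [hΦPdef]; exact tsum_congr this
      _ = ΦP x := (Equiv.addLeft s).tsum_eq (fun k : ℤ => P (x + (k : ℝ) • ν))
  -- negation reindexing of ΦP
  have hΦneg : ∀ x : EuclideanSpace ℝ (Fin d), ∑' s : ℤ, P (x - (s : ℝ) • ν) = ΦP x := by
    intro x
    calc ∑' s : ℤ, P (x - (s : ℝ) • ν) = ∑' s : ℤ, P (x + ((-s : ℤ) : ℝ) • ν) := by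
          exact tsum_congr fun s => by rw [hvneg]
      _ = ΦP x := (Equiv.neg ℤ).tsum_eq (fun k : ℤ => P (x + (k : ℝ) • ν))
  -- q is integrable, and its lintegral is 1
  have hqI : Integrable q := by
    by_contra h
    rw [integral_undef h] at hqint
    norm_num at hqint
  have hQlint : ∫⁻ x, Q x = 1 := by
    have h0 : 0 ≤ᵐ[volume] q := Filter.Eventually.of_forall fun x => (hqpos x).le
    rw [← ofReal_integral_eq_lintegral_ofReal hqI h0, hqint, ENNReal.ofReal_one]
  -- a.e. facts about ΦP, ΦQ
  have hae : ∀ᵐ x : EuclideanSpace ℝ (Fin d),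
      ΦQ x = ENNReal.ofReal (∑' s : ℤ, q (x + (s : ℝ) • ν)) ∧
      ΦP x = ENNReal.ofReal (∑' k : ℤ, p (x + (k : ℝ) • ν)) ∧
      ΦP x ≠ 0 ∧ ΦP x ≠ ∞ ∧ ΦQ x ≠ ∞ := by
    filter_upwards [hsums] with x ⟨hsq, hsp, hppos'⟩
    have h1 : ENNReal.ofReal (∑' s : ℤ, q (x + (s : ℝ) • ν)) = ΦQ x :=
      ENNReal.ofReal_tsum_of_nonneg (fun s => (hqpos _).le) hsq
    have h2 : ENNReal.ofReal (∑' k : ℤ, p (x + (k : ℝ) • ν)) = ΦP x :=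
      ENNReal.ofReal_tsum_of_nonneg (fun k => (hppos _).le) hsp
    refine ⟨h1.symm, h2.symm, ?_, ?_, ?_⟩
    · rw [← h2]; simpa using (ENNReal.ofReal_pos.2 hppos').ne'
    · rw [← h2]; exact ENNReal.ofReal_ne_top
    · rw [← h1]; exact ENNReal.ofReal_ne_top
  -- the key lintegral computation
  have key : ∫⁻ x : EuclideanSpace ℝ (Fin d), P x * ΦQ x / ΦP x = 1 := by
    have step1 : ∀ x : EuclideanSpace ℝ (Fin d), P x * ΦQ x / ΦP x
        = ∑' s : ℤ, P x * Q (x + (s : ℝ) • ν) / ΦP x := by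
      intro x
      simp only [div_eq_mul_inv, hΦQdef]
      rw [ENNReal.tsum_mul_right, ENNReal.tsum_mul_left]
    have step2 : ∫⁻ x : EuclideanSpace ℝ (Fin d), ∑' s : ℤ, P x * Q (x + (s : ℝ) • ν) / ΦP x
        = ∑' s : ℤ, ∫⁻ x : EuclideanSpace ℝ (Fin d), P x * Q (x + (s : ℝ) • ν) / ΦP x :=
      lintegral_tsum fun s => ((hPm.mul (hQs s)).div hΦPm).aemeasurable
    have step3 : ∀ s : ℤ, ∫⁻ x : EuclideanSpace ℝ (Fin d), P x * Q (x + (s : ℝ) • ν) / ΦP x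
        = ∫⁻ u : EuclideanSpace ℝ (Fin d), P (u - (s : ℝ) • ν) * Q u / ΦP u := by
      intro s
      have h1 := lintegral_add_right_eq_self (μ := (volume : Measure (EuclideanSpace ℝ (Fin d))))
        (fun u => P (u - (s : ℝ) • ν) * Q u / ΦP (u - (s : ℝ) • ν)) ((s : ℝ) • ν)
      calc ∫⁻ x : EuclideanSpace ℝ (Fin d), P x * Q (x + (s : ℝ) • ν) / ΦP x
          = ∫⁻ x : EuclideanSpace ℝ (Fin d),
              P (x + (s : ℝ) • ν - (s : ℝ) • ν) * Q (x + (s : ℝ) • ν)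
                / ΦP (x + (s : ℝ) • ν - (s : ℝ) • ν) :=
            lintegral_congr fun x => by rw [add_sub_cancel_right]
        _ = ∫⁻ x : EuclideanSpace ℝ (Fin d),
              P (x - (s : ℝ) • ν) * Q x / ΦP (x - (s : ℝ) • ν) := h1
        _ = ∫⁻ u : EuclideanSpace ℝ (Fin d), P (u - (s : ℝ) • ν) * Q u / ΦP u :=
            lintegral_congr fun u => by
              rw [show ΦP (u - (s : ℝ) • ν) = ΦP u from by rw [hvneg]; exact hΦshift u (-s)]
    have step4 : ∑' s : ℤ, ∫⁻ u : EuclideanSpace ℝ (Fin d), P (u - (s : ℝ) • ν) * Q u / ΦP u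
        = ∫⁻ u : EuclideanSpace ℝ (Fin d), ∑' s : ℤ, P (u - (s : ℝ) • ν) * Q u / ΦP u :=
      (lintegral_tsum fun s =>
        (((hPm.comp (measurable_sub_const _)).mul hQm).div hΦPm).aemeasurable).symm
    have step5 : ∫⁻ u : EuclideanSpace ℝ (Fin d), ∑' s : ℤ, P (u - (s : ℝ) • ν) * Q u / ΦP u
        = ∫⁻ u : EuclideanSpace ℝ (Fin d), Q u := by
      refine lintegral_congr_ae ?_
      filter_upwards [hae] with u ⟨_, _, h0, htop, _⟩
      simp only [div_eq_mul_inv]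
      rw [ENNReal.tsum_mul_right, ENNReal.tsum_mul_right, hΦneg u,
        mul_comm (ΦP u) (Q u), mul_assoc, ENNReal.mul_inv_cancel h0 htop, mul_one]
    calc ∫⁻ x : EuclideanSpace ℝ (Fin d), P x * ΦQ x / ΦP x
        = ∫⁻ x : EuclideanSpace ℝ (Fin d), ∑' s : ℤ, P x * Q (x + (s : ℝ) • ν) / ΦP x :=
          lintegral_congr fun x => step1 x
      _ = ∑' s : ℤ, ∫⁻ x : EuclideanSpace ℝ (Fin d), P x * Q (x + (s : ℝ) • ν) / ΦP x := step2
      _ = ∑' s : ℤ, ∫⁻ u : EuclideanSpace ℝ (Fin d), P (u - (s : ℝ) • ν) * Q u / ΦP u := tsum_congr step3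
      _ = ∫⁻ u : EuclideanSpace ℝ (Fin d), ∑' s : ℤ, P (u - (s : ℝ) • ν) * Q u / ΦP u := step4
      _ = ∫⁻ u : EuclideanSpace ℝ (Fin d), Q u := step5
      _ = 1 := hQlint
  -- relate the real integrand to the ENNReal one
  set g : EuclideanSpace ℝ (Fin d) → ℝ := fun x => (P x * ΦQ x / ΦP x).toReal with hgdef
  have hgm : Measurable g := ((hPm.mul hΦQm).div hΦPm).ennreal_toReal
  have hfg : (fun x => p x * (∑' s : ℤ, q (x + (s : ℝ) • ν))
      / (∑' k : ℤ, p (x + (k : ℝ) • ν))) =ᵐ[volume] g := by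
    filter_upwards [hae] with x ⟨hQx, hPx, h0, htop, hQtop⟩
    have : g x = (P x).toReal * (ΦQ x).toReal / (ΦP x).toReal := by
      rw [hgdef]; simp [ENNReal.toReal_div, ENNReal.toReal_mul]
    rw [this, hQx, hPx, hPdef]
    simp [ENNReal.toReal_ofReal (hppos x).le,
      ENNReal.toReal_ofReal (tsum_nonneg fun s => (hqpos _).le),
      ENNReal.toReal_ofReal (tsum_nonneg fun k => (hppos _).le)]
  rw [integral_congr_ae hfg]
  have hgnn : 0 ≤ᵐ[volume] g := Filter.Eventually.of_forall fun x => ENNReal.toReal_nonneg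
  rw [integral_eq_lintegral_of_nonneg_ae hgnn hgm.aestronglyMeasurable]
  have : ∫⁻ x, ENNReal.ofReal (g x) = 1 := by
    rw [lintegral_congr_ae (g := fun x => P x * ΦQ x / ΦP x) ?_]
    · exact key
    · filter_upwards [hae] with x ⟨_, _, h0, htop, hQtop⟩
      rw [hgdef]
      refine ENNReal.ofReal_toReal ?_
      exact (ENNReal.div_lt_top (by finiteness) h0).ne
  rw [this, ENNReal.toReal_one]
end
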